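/- For any pure two-qubit state, the maximum win probability of the Bell-distinguishing game equals ½(1 + C(|ψ⟩)): i.e. max over 2×2 unitaries U,V of ½(√(⟨ψ|Π_A⁺Π_B⁺|ψ⟩) + √(⟨ψ|Π_A⁻Π_B⁻|ψ⟩))², with Π^± = (𝟙±(U+U†)/2)/2 acting locally, equals ½(1 + 2√(λ₀λ₁)) where λ₀, λ₁ are the Schmidt coefficients of |ψ⟩. -/

import Mathlib

open Matrix Kronecker

/-- The BD-game win probability ½(√⟨Π_A⁺Π_B⁺⟩ + √⟨Π_A⁻Π_B⁻⟩)² for local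
unitaries U, V, where Π^± = (𝟙 ± (U+U†)/2)/2 act locally. -/
noncomputable def bdWinProb (ψ : Fin 2 × Fin 2 → ℂ)
    (U V : Matrix (Fin 2) (Fin 2) ℂ) : ℝ :=
  let A : Matrix (Fin 2) (Fin 2) ℂ := (2 : ℂ)⁻¹ • (U + Uᴴ)
  let B : Matrix (Fin 2) (Fin 2) ℂ := (2 : ℂ)⁻¹ • (V + Vᴴ)
  let PiAp := ((2 : ℂ)⁻¹ • (1 + A)) ⊗ₖ (1 : Matrix (Fin 2) (Fin 2) ℂ)
  let PiAm := ((2 : ℂ)⁻¹ • (1 - A)) ⊗ₖ (1 : Matrix (Fin 2) (Fin 2) ℂ)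
  let PiBp := (1 : Matrix (Fin 2) (Fin 2) ℂ) ⊗ₖ ((2 : ℂ)⁻¹ • (1 + B))
  let PiBm := (1 : Matrix (Fin 2) (Fin 2) ℂ) ⊗ₖ ((2 : ℂ)⁻¹ • (1 - B))
  (1/2) * (Real.sqrt ((star ψ ⬝ᵥ ((PiAp * PiBp) *ᵥ ψ)).re) +
           Real.sqrt ((star ψ ⬝ᵥ ((PiAm * PiBm) *ᵥ ψ)).re)) ^ 2

/-!
Put `R± = (1 ± U)/2` and `S± = (1 ± V)/2`. For unitary `U` one has `Π_A^± = R±ᴴ R±`, so the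
two expectation values in the win probability are `‖(R± ⊗ S±) ψ‖²`. Over the Schmidt
decomposition `ψ = Σ_k √λ_k e_k ⊗ f_k` the triangle inequality gives
`‖(R± ⊗ S±) ψ‖ ≤ Σ_k √λ_k ‖R± e_k‖ ‖S± f_k‖`, and since `‖R⁺ e‖² + ‖R⁻ e‖² = ‖e‖²`,
Cauchy–Schwarz bounds `‖R⁺ e_k‖ ‖S⁺ f_k‖ + ‖R⁻ e_k‖ ‖S⁻ f_k‖` by `1`. So the win probability is
at most `½ (√λ₀ + √λ₁)² = ½ (1 + 2 √(λ₀ λ₁))`.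

If `U` and `V` swap the two Schmidt vectors on each side, both `(R± ⊗ S±) ψ` are
`(√λ₀ + √λ₁)` times a product of two vectors of norm `1/√2`, and the bound is attained.
-/

open WithLp

def kroneckerVec {R m n : Type*} [Mul R] (u : m → R) (w : n → R) : m × n → R :=
  fun p => u p.1 * w p.2

theorem kroneckerVec_smul_smul {R m n : Type*} [CommSemiring R] (x y : R) (u : m → R)
    (w : n → R) : kroneckerVec (x • u) (y • w) = (x * y) • kroneckerVec u w := by
  ext p
  simp only [kroneckerVec, Pi.smul_apply, smul_eq_mul]
  ring

theorem kronecker_mulVec_kroneckerVec {R m n m' n' : Type*} [CommSemiring R] [Fintype m]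
    [Fintype n] (P : Matrix m' m R) (Q : Matrix n' n R) (u : m → R) (w : n → R) :
    (P ⊗ₖ Q) *ᵥ kroneckerVec u w = kroneckerVec (P *ᵥ u) (Q *ᵥ w) := by
  ext ⟨i, j⟩
  simp only [mulVec, dotProduct, kroneckerVec, kroneckerMap_apply, Fintype.sum_prod_type,
    Finset.sum_mul_sum]
  exact Finset.sum_congr rfl fun _ _ => Finset.sum_congr rfl fun _ _ => by ring

section Norms

variable {𝕜 : Type*} [RCLike 𝕜] {ι m n m' n' : Type*} [Fintype ι] [Fintype m] [Fintype n]
  [Fintype m'] [Fintype n']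

theorem norm_toLp_kroneckerVec (u : m → 𝕜) (w : n → 𝕜) :
    ‖toLp 2 (kroneckerVec u w)‖ = ‖toLp 2 u‖ * ‖toLp 2 w‖ := by
  simp only [EuclideanSpace.norm_eq, kroneckerVec, norm_mul, mul_pow, Fintype.sum_prod_type,
    ← Finset.sum_mul_sum]
  exact Real.sqrt_mul (Finset.sum_nonneg fun _ _ => by positivity) _

theorem inner_toLp_toLp_eq_star_dotProduct (v w : n → 𝕜) :
    inner 𝕜 (toLp 2 v) (toLp 2 w) = star v ⬝ᵥ w := by
  rw [EuclideanSpace.inner_toLp_toLp, dotProduct_comm]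

theorem norm_toLp_eq_one_of_star_dotProduct_self {v : n → 𝕜} (hv : star v ⬝ᵥ v = 1) :
    ‖toLp 2 v‖ = 1 := by
  have h := inner_self_eq_norm_sq_to_K (𝕜 := 𝕜) (toLp 2 v)
  rw [inner_toLp_toLp_eq_star_dotProduct, hv] at h
  exact (pow_eq_one_iff_of_nonneg (norm_nonneg _) two_ne_zero).mp (by exact_mod_cast h.symm)

theorem norm_sq_toLp_half_smul_add {e₀ e₁ : n → 𝕜} (he₀ : star e₀ ⬝ᵥ e₀ = 1)
    (he₁ : star e₁ ⬝ᵥ e₁ = 1) (he : star e₀ ⬝ᵥ e₁ = 0) :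
    ‖toLp 2 ((2 : 𝕜)⁻¹ • (e₀ + e₁))‖ ^ 2 = 2⁻¹ := by
  rw [toLp_smul, toLp_add, norm_smul, mul_pow, sq ‖toLp 2 e₀ + toLp 2 e₁‖,
    norm_add_sq_eq_norm_sq_add_norm_sq_of_inner_eq_zero _ _
      (by rw [inner_toLp_toLp_eq_star_dotProduct, he]),
    norm_toLp_eq_one_of_star_dotProduct_self he₀, norm_toLp_eq_one_of_star_dotProduct_self he₁]
  norm_num

theorem star_dotProduct_conjTranspose_mul_self_mulVec (G : Matrix m n 𝕜) (v : n → 𝕜) :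
    star v ⬝ᵥ ((Gᴴ * G) *ᵥ v) = (‖toLp 2 (G *ᵥ v)‖ : 𝕜) ^ 2 := by
  rw [← inner_self_eq_norm_sq_to_K, inner_toLp_toLp_eq_star_dotProduct, ← mulVec_mulVec,
    dotProduct_mulVec, ← star_mulVec]

theorem norm_kronecker_mulVec_sum_le (R : Matrix m' m 𝕜) (S : Matrix n' n 𝕜) (c : ι → ℝ)
    (hc : ∀ k, 0 ≤ c k) (e : ι → m → 𝕜) (f : ι → n → 𝕜) :
    ‖toLp 2 ((R ⊗ₖ S) *ᵥ ∑ k, (c k : 𝕜) • kroneckerVec (e k) (f k))‖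
      ≤ ∑ k, c k * (‖toLp 2 (R *ᵥ e k)‖ * ‖toLp 2 (S *ᵥ f k)‖) := by
  rw [mulVec_sum, toLp_sum]
  refine (norm_sum_le _ _).trans (Finset.sum_le_sum fun k _ => le_of_eq ?_)
  rw [mulVec_smul, kronecker_mulVec_kroneckerVec, toLp_smul, norm_smul, norm_toLp_kroneckerVec,
    RCLike.norm_ofReal, abs_of_nonneg (hc k)]

end Norms

section Unitary

variable {𝕜 : Type*} [RCLike 𝕜] {ι n : Type*} [Fintype ι] [DecidableEq ι] [Fintype n]
  [DecidableEq n]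

theorem half_smul_one_add_eq_conjTranspose_mul_self {U : Matrix n n 𝕜} (hU : Uᴴ * U = 1) :
    (2 : 𝕜)⁻¹ • (1 + (2 : 𝕜)⁻¹ • (U + Uᴴ))
      = ((2 : 𝕜)⁻¹ • (1 + U))ᴴ * ((2 : 𝕜)⁻¹ • (1 + U)) := by
  rw [conjTranspose_smul, conjTranspose_add, conjTranspose_one, smul_mul_smul_comm, add_mul,
    mul_add, mul_add, hU]
  simp only [star_inv₀, star_ofNat, one_mul, mul_one, smul_add]
  module

theorem half_smul_one_sub_eq_conjTranspose_mul_self {U : Matrix n n 𝕜} (hU : Uᴴ * U = 1) :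
    (2 : 𝕜)⁻¹ • (1 - (2 : 𝕜)⁻¹ • (U + Uᴴ))
      = ((2 : 𝕜)⁻¹ • (1 - U))ᴴ * ((2 : 𝕜)⁻¹ • (1 - U)) := by
  have h := half_smul_one_add_eq_conjTranspose_mul_self (U := -U)
    (by rwa [conjTranspose_neg, neg_mul_neg])
  rwa [conjTranspose_neg, ← neg_add, smul_neg, ← sub_eq_add_neg, ← sub_eq_add_neg] at h

theorem norm_sq_half_one_add_mulVec_add_norm_sq_half_one_sub_mulVec {U : Matrix n n 𝕜}
    (hU : Uᴴ * U = 1) (v : n → 𝕜) :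
    ‖toLp 2 (((2 : 𝕜)⁻¹ • (1 + U)) *ᵥ v)‖ ^ 2 + ‖toLp 2 (((2 : 𝕜)⁻¹ • (1 - U)) *ᵥ v)‖ ^ 2
      = ‖toLp 2 v‖ ^ 2 := by
  have h : star v ⬝ᵥ (((2 : 𝕜)⁻¹ • (1 + (2 : 𝕜)⁻¹ • (U + Uᴴ))
      + (2 : 𝕜)⁻¹ • (1 - (2 : 𝕜)⁻¹ • (U + Uᴴ))) *ᵥ v) = star v ⬝ᵥ v := by
    rw [← smul_add, add_add_sub_cancel, ← two_smul 𝕜, smul_smul, inv_mul_cancel₀ two_ne_zero,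
      one_smul, one_mulVec]
  rw [half_smul_one_add_eq_conjTranspose_mul_self hU,
    half_smul_one_sub_eq_conjTranspose_mul_self hU, add_mulVec, dotProduct_add,
    star_dotProduct_conjTranspose_mul_self_mulVec, star_dotProduct_conjTranspose_mul_self_mulVec,
    ← inner_toLp_toLp_eq_star_dotProduct, inner_self_eq_norm_sq_to_K] at h
  exact_mod_cast h

theorem exists_mem_unitaryGroup_mulVec_eq_perm (b : ι → ι → 𝕜)
    (hb : ∀ i j, star (b i) ⬝ᵥ b j = (1 : Matrix ι ι 𝕜) i j) (σ : Equiv.Perm ι) :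
    ∃ U ∈ unitaryGroup ι 𝕜, ∀ i, U *ᵥ b i = b (σ i) := by
  set E : Matrix ι ι 𝕜 := (of b)ᵀ
  have hE : star E * E = 1 := by
    ext i j
    simpa [E, mul_apply, dotProduct] using hb i j
  have hcol : ∀ i, E *ᵥ Pi.single i 1 = b i := fun i => by rw [mulVec_single_one]; rfl
  have hEu : E ∈ unitaryGroup ι 𝕜 := mem_unitaryGroup_iff'.mpr hE
  have hX : σ⁻¹.permMatrix 𝕜 ∈ unitaryGroup ι 𝕜 := by
    rw [mem_unitaryGroup_iff', star_eq_conjTranspose, conjTranspose_permMatrix, inv_inv,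
      ← permMatrix_mul, inv_mul_cancel, permMatrix_one]
  refine ⟨E * σ⁻¹.permMatrix 𝕜 * star E, mul_mem (mul_mem hEu hX) (Unitary.star_mem hEu),
    fun i => ?_⟩
  calc (E * σ⁻¹.permMatrix 𝕜 * star E) *ᵥ b i
      = (E * σ⁻¹.permMatrix 𝕜 * (star E * E)) *ᵥ Pi.single i 1 := by
        rw [← hcol, mulVec_mulVec, Matrix.mul_assoc (E * _)]
    _ = E *ᵥ Pi.single (σ i) 1 := by
        rw [hE, Matrix.mul_one, ← mulVec_mulVec, permMatrix_mulVec, Pi.single_comp_equiv,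
          Equiv.Perm.inv_def, Equiv.symm_symm]
    _ = b (σ i) := hcol _

theorem exists_mem_unitaryGroup_swap {e₀ e₁ : Fin 2 → 𝕜}
    (he₀ : star e₀ ⬝ᵥ e₀ = 1) (he₁ : star e₁ ⬝ᵥ e₁ = 1) (he : star e₀ ⬝ᵥ e₁ = 0) :
    ∃ U ∈ unitaryGroup (Fin 2) 𝕜, U *ᵥ e₀ = e₁ ∧ U *ᵥ e₁ = e₀ := by
  have he' : star e₁ ⬝ᵥ e₀ = 0 := by rw [star_dotProduct, he, star_zero]
  obtain ⟨U, hU, hUe⟩ := exists_mem_unitaryGroup_mulVec_eq_perm ![e₀, e₁]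
    (by intro i j; fin_cases i <;> fin_cases j <;> simp [he₀, he₁, he, he']) (Equiv.swap 0 1)
  exact ⟨U, hU, by simpa using hUe 0, by simpa using hUe 1⟩

end Unitary

theorem mul_add_mul_le_one {a a' b b' : ℝ} (ha : a ^ 2 + a' ^ 2 = 1) (hb : b ^ 2 + b' ^ 2 = 1) :
    a * b + a' * b' ≤ 1 := by
  nlinarith [sq_nonneg (a - b), sq_nonneg (a' - b')]

theorem bdWinProb_eq {U V : Matrix (Fin 2) (Fin 2) ℂ} (hU : Uᴴ * U = 1) (hV : Vᴴ * V = 1)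
    (ψ : Fin 2 × Fin 2 → ℂ) :
    bdWinProb ψ U V = 1 / 2 *
      (‖toLp 2 ((((2 : ℂ)⁻¹ • (1 + U)) ⊗ₖ ((2 : ℂ)⁻¹ • (1 + V))) *ᵥ ψ)‖
        + ‖toLp 2 ((((2 : ℂ)⁻¹ • (1 - U)) ⊗ₖ ((2 : ℂ)⁻¹ • (1 - V))) *ᵥ ψ)‖) ^ 2 := by
  have hquad : ∀ R S : Matrix (Fin 2) (Fin 2) ℂ,
      √(star ψ ⬝ᵥ (((Rᴴ * R) ⊗ₖ 1 * 1 ⊗ₖ (Sᴴ * S)) *ᵥ ψ)).re = ‖toLp 2 ((R ⊗ₖ S) *ᵥ ψ)‖ := by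
    intro R S
    rw [← mul_kronecker_mul, mul_one, one_mul, mul_kronecker_mul, ← conjTranspose_kronecker,
      star_dotProduct_conjTranspose_mul_self_mulVec]
    norm_cast
    exact Real.sqrt_sq (norm_nonneg _)
  simp only [bdWinProb]
  rw [half_smul_one_add_eq_conjTranspose_mul_self hU,
    half_smul_one_sub_eq_conjTranspose_mul_self hU,
    half_smul_one_add_eq_conjTranspose_mul_self hV,
    half_smul_one_sub_eq_conjTranspose_mul_self hV, hquad, hquad]

theorem bdWinProb_le {ι : Type*} [Fintype ι] {U V : Matrix (Fin 2) (Fin 2) ℂ}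
    (hU : Uᴴ * U = 1) (hV : Vᴴ * V = 1) (c : ι → ℝ) (hc : ∀ k, 0 ≤ c k)
    (e f : ι → Fin 2 → ℂ) (he : ∀ k, star (e k) ⬝ᵥ e k = 1) (hf : ∀ k, star (f k) ⬝ᵥ f k = 1) :
    bdWinProb (∑ k, (c k : ℂ) • kroneckerVec (e k) (f k)) U V ≤ 1 / 2 * (∑ k, c k) ^ 2 := by
  have hcauchy : ∀ k,
      ‖toLp 2 (((2 : ℂ)⁻¹ • (1 + U)) *ᵥ e k)‖ * ‖toLp 2 (((2 : ℂ)⁻¹ • (1 + V)) *ᵥ f k)‖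
        + ‖toLp 2 (((2 : ℂ)⁻¹ • (1 - U)) *ᵥ e k)‖ * ‖toLp 2 (((2 : ℂ)⁻¹ • (1 - V)) *ᵥ f k)‖
        ≤ 1 :=
    fun k => mul_add_mul_le_one
      (by rw [norm_sq_half_one_add_mulVec_add_norm_sq_half_one_sub_mulVec hU,
        norm_toLp_eq_one_of_star_dotProduct_self (he k), one_pow])
      (by rw [norm_sq_half_one_add_mulVec_add_norm_sq_half_one_sub_mulVec hV,
        norm_toLp_eq_one_of_star_dotProduct_self (hf k), one_pow])
  rw [bdWinProb_eq hU hV]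
  gcongr
  calc _ ≤ _ := add_le_add (norm_kronecker_mulVec_sum_le _ _ c hc e f)
          (norm_kronecker_mulVec_sum_le _ _ c hc e f)
    _ = ∑ k, c k *
          (‖toLp 2 (((2 : ℂ)⁻¹ • (1 + U)) *ᵥ e k)‖ * ‖toLp 2 (((2 : ℂ)⁻¹ • (1 + V)) *ᵥ f k)‖
          + ‖toLp 2 (((2 : ℂ)⁻¹ • (1 - U)) *ᵥ e k)‖ * ‖toLp 2 (((2 : ℂ)⁻¹ • (1 - V)) *ᵥ f k)‖) := by
        rw [← Finset.sum_add_distrib]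
        simp only [mul_add]
    _ ≤ ∑ k, c k := Finset.sum_le_sum fun k _ => mul_le_of_le_one_right (hc k) (hcauchy k)

theorem bdWinProb_of_mulVec_swap (s₀ s₁ : ℝ) {e₀ e₁ f₀ f₁ : Fin 2 → ℂ}
    (he₀ : star e₀ ⬝ᵥ e₀ = 1) (he₁ : star e₁ ⬝ᵥ e₁ = 1) (he : star e₀ ⬝ᵥ e₁ = 0)
    (hf₀ : star f₀ ⬝ᵥ f₀ = 1) (hf₁ : star f₁ ⬝ᵥ f₁ = 1) (hf : star f₀ ⬝ᵥ f₁ = 0)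
    {U V : Matrix (Fin 2) (Fin 2) ℂ} (hU : Uᴴ * U = 1) (hV : Vᴴ * V = 1)
    (hUe₀ : U *ᵥ e₀ = e₁) (hUe₁ : U *ᵥ e₁ = e₀) (hVf₀ : V *ᵥ f₀ = f₁) (hVf₁ : V *ᵥ f₁ = f₀) :
    bdWinProb ((s₀ : ℂ) • kroneckerVec e₀ f₀ + (s₁ : ℂ) • kroneckerVec e₁ f₁) U V
      = 1 / 2 * (s₀ + s₁) ^ 2 := by
  have hnorm : ∀ (R S : Matrix (Fin 2) (Fin 2) ℂ) (a b : Fin 2 → ℂ) (ε : ℂ), ε * ε = 1 →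
      R *ᵥ e₀ = a → R *ᵥ e₁ = ε • a → S *ᵥ f₀ = b → S *ᵥ f₁ = ε • b →
      ‖toLp 2 ((R ⊗ₖ S) *ᵥ ((s₀ : ℂ) • kroneckerVec e₀ f₀ + (s₁ : ℂ) • kroneckerVec e₁ f₁))‖
        = |s₀ + s₁| * (‖toLp 2 a‖ * ‖toLp 2 b‖) := by
    intro R S a b ε hε hRe₀ hRe₁ hSf₀ hSf₁
    rw [mulVec_add, mulVec_smul, mulVec_smul, kronecker_mulVec_kroneckerVec,
      kronecker_mulVec_kroneckerVec, hRe₀, hRe₁, hSf₀, hSf₁, kroneckerVec_smul_smul, hε, one_smul,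
      ← add_smul, toLp_smul, norm_smul, norm_toLp_kroneckerVec, ← Complex.ofReal_add,
      Complex.norm_real, Real.norm_eq_abs]
  have hhalf : ∀ a b : Fin 2 → ℂ, ‖toLp 2 a‖ ^ 2 = 2⁻¹ → ‖toLp 2 b‖ ^ 2 = 2⁻¹ →
      ‖toLp 2 a‖ * ‖toLp 2 b‖ = 2⁻¹ := by
    intro a b ha hb
    rw [(sq_eq_sq₀ (norm_nonneg _) (norm_nonneg _)).mp (ha.trans hb.symm), ← sq, hb]
  have hplus : ∀ (W : Matrix (Fin 2) (Fin 2) ℂ) v,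
      ((2 : ℂ)⁻¹ • (1 + W)) *ᵥ v = (2 : ℂ)⁻¹ • (v + W *ᵥ v) := by
    intro W v
    rw [smul_mulVec, add_mulVec, one_mulVec]
  have hminus : ∀ (W : Matrix (Fin 2) (Fin 2) ℂ) v,
      ((2 : ℂ)⁻¹ • (1 - W)) *ᵥ v = (2 : ℂ)⁻¹ • (v - W *ᵥ v) := by
    intro W v
    rw [smul_mulVec, sub_mulVec, one_mulVec]
  have he₁' : star (-e₁) ⬝ᵥ -e₁ = 1 := by rw [star_neg, neg_dotProduct_neg, he₁]
  have hf₁' : star (-f₁) ⬝ᵥ -f₁ = 1 := by rw [star_neg, neg_dotProduct_neg, hf₁]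
  rw [bdWinProb_eq hU hV,
    hnorm _ _ ((2 : ℂ)⁻¹ • (e₀ + e₁)) ((2 : ℂ)⁻¹ • (f₀ + f₁)) 1 (one_mul 1)
      (by rw [hplus, hUe₀]) (by rw [hplus, hUe₁, one_smul, add_comm])
      (by rw [hplus, hVf₀]) (by rw [hplus, hVf₁, one_smul, add_comm]),
    hnorm _ _ ((2 : ℂ)⁻¹ • (e₀ - e₁)) ((2 : ℂ)⁻¹ • (f₀ - f₁)) (-1) (by norm_num)
      (by rw [hminus, hUe₀]) (by rw [hminus, hUe₁]; module)
      (by rw [hminus, hVf₀]) (by rw [hminus, hVf₁]; module),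
    hhalf _ _ (norm_sq_toLp_half_smul_add he₀ he₁ he) (norm_sq_toLp_half_smul_add hf₀ hf₁ hf),
    sub_eq_add_neg, sub_eq_add_neg,
    hhalf _ _ (norm_sq_toLp_half_smul_add he₀ he₁' (by rw [dotProduct_neg, he, neg_zero]))
      (norm_sq_toLp_half_smul_add hf₀ hf₁' (by rw [dotProduct_neg, hf, neg_zero])),
    ← add_mul, ← two_mul, mul_pow, mul_pow, sq_abs]
  ring

/-- The maximum BD-game win probability for a pure two-qubit state with Schmidt
coefficients λ₀, λ₁ equals ½(1 + 2√(λ₀λ₁)) = ½(1 + C(|ψ⟩)). -/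
theorem stmt_16 (lam₀ lam₁ : ℝ) (h0 : 0 ≤ lam₀) (h1 : 0 ≤ lam₁) (hsum : lam₀ + lam₁ = 1)
    (e₀ e₁ f₀ f₁ : Fin 2 → ℂ)
    (he₀ : star e₀ ⬝ᵥ e₀ = 1) (he₁ : star e₁ ⬝ᵥ e₁ = 1) (he : star e₀ ⬝ᵥ e₁ = 0)
    (hf₀ : star f₀ ⬝ᵥ f₀ = 1) (hf₁ : star f₁ ⬝ᵥ f₁ = 1) (hf : star f₀ ⬝ᵥ f₁ = 0)
    (ψ : Fin 2 × Fin 2 → ℂ)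
    (hψ : ψ = fun p => (Real.sqrt lam₀ : ℂ) * e₀ p.1 * f₀ p.2 +
                       (Real.sqrt lam₁ : ℂ) * e₁ p.1 * f₁ p.2) :
    IsGreatest { x : ℝ | ∃ U ∈ Matrix.unitaryGroup (Fin 2) ℂ,
        ∃ V ∈ Matrix.unitaryGroup (Fin 2) ℂ, x = bdWinProb ψ U V }
      ((1/2) * (1 + 2 * Real.sqrt (lam₀ * lam₁))) := by
  have hψ' : ψ = (√lam₀ : ℂ) • kroneckerVec e₀ f₀ + (√lam₁ : ℂ) • kroneckerVec e₁ f₁ := by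
    rw [hψ]
    ext p
    simp only [kroneckerVec, Pi.add_apply, Pi.smul_apply, smul_eq_mul, mul_assoc]
  have hval : 1 / 2 * (1 + 2 * √(lam₀ * lam₁)) = 1 / 2 * (√lam₀ + √lam₁) ^ 2 := by
    rw [add_sq, Real.sq_sqrt h0, Real.sq_sqrt h1, Real.sqrt_mul h0]
    linarith
  obtain ⟨U, hU, hUe₀, hUe₁⟩ := exists_mem_unitaryGroup_swap he₀ he₁ he
  obtain ⟨V, hV, hVf₀, hVf₁⟩ := exists_mem_unitaryGroup_swap hf₀ hf₁ hf
  rw [hval, hψ']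
  refine ⟨⟨U, hU, V, hV, (bdWinProb_of_mulVec_swap _ _ he₀ he₁ he hf₀ hf₁ hf
    (mem_unitaryGroup_iff'.mp hU) (mem_unitaryGroup_iff'.mp hV) hUe₀ hUe₁ hVf₀ hVf₁).symm⟩, ?_⟩
  rintro x ⟨U, hU, V, hV, rfl⟩
  simpa [Fin.sum_univ_two] using bdWinProb_le (mem_unitaryGroup_iff'.mp hU)
    (mem_unitaryGroup_iff'.mp hV) ![√lam₀, √lam₁]
    (Fin.forall_fin_two.mpr ⟨Real.sqrt_nonneg _, Real.sqrt_nonneg _⟩) ![e₀, e₁] ![f₀, f₁]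
    (Fin.forall_fin_two.mpr ⟨he₀, he₁⟩) (Fin.forall_fin_two.mpr ⟨hf₀, hf₁⟩)
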